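/- In the game Nim(n, =k) (exact k-Nim) with n < 2k and k ≥ 1, a position has normal SG value 0 if and only if it is terminal, i.e., has fewer than k nonempty piles; consequently the game has no (0,0)-position. -/
import Mathlib


/-- Minimum excludant: least natural number not in `S`. -/
noncomputable def mex (S : Set ℕ) : ℕ := sInf {n | n ∉ S}

/-- A move of exact `k`-Nim: strictly decrease exactly `k` of the piles. -/
def exactKNimMove {n : ℕ} (k : ℕ) (x y : Fin n → ℕ) : Prop :=
  ∃ S : Finset (Fin n), S.card = k ∧ (∀ i ∈ S, y i < x i) ∧
    ∀ i ∉ S, y i = x i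

lemma mex_empty : mex (∅ : Set ℕ) = 0 := by
  simp [mex]

lemma mex_not_mem {S : Set ℕ} (h : S.Finite) : mex S ∉ S := by
  have hne : {n | n ∉ S}.Nonempty := (Set.Finite.infinite_compl h).nonempty
  exact Nat.sInf_mem hne

lemma move_set_finite {n k : ℕ} (x : Fin n → ℕ) :
    {y | exactKNimMove k x y}.Finite := by
  apply Set.Finite.subset (Set.Finite.pi (fun i => Set.finite_Iic (x i)))
  rintro y ⟨S, _, hlt, heq⟩
  rw [Set.mem_univ_pi]
  intro i
  by_cases hi : i ∈ S
  · exact le_of_lt (hlt i hi)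
  · exact le_of_eq (heq i hi)

lemma value_set_finite {n k : ℕ} (F : (Fin n → ℕ) → ℕ) (x : Fin n → ℕ) :
    {v | ∃ y, exactKNimMove k x y ∧ v = F y}.Finite := by
  have h : {v | ∃ y, exactKNimMove k x y ∧ v = F y}
      = F '' {y | exactKNimMove k x y} := by
    ext v
    constructor
    · rintro ⟨y, h1, h2⟩; exact ⟨y, h1, h2.symm⟩
    · rintro ⟨y, h1, h2⟩; exact ⟨y, h1, h2.symm⟩
  rw [h]
  exact (move_set_finite x).image F

/-- In exact `k`-Nim with `n < 2k`, the positions of SG value `0` are exactly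
the terminal positions (fewer than `k` nonempty piles); hence there is no
`(0,0)`-position. -/
theorem exact_k_nim_zero_iff_terminal (n k : ℕ) (hk : 1 ≤ k) (hn : n < 2 * k)
    (G Gm : (Fin n → ℕ) → ℕ)
    (hG : ∀ x, G x = mex {v | ∃ y, exactKNimMove k x y ∧ v = G y})
    (hGmT : ∀ x, (∀ y, ¬ exactKNimMove k x y) → Gm x = 1)
    (hGm : ∀ x, (∃ y, exactKNimMove k x y) →
      Gm x = mex {v | ∃ y, exactKNimMove k x y ∧ v = Gm y}) :
    (∀ x : Fin n → ℕ,
      G x = 0 ↔ (Finset.univ.filter (fun i => 0 < x i)).card < k) ∧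
    (∀ x : Fin n → ℕ, ¬ (G x = 0 ∧ Gm x = 0)) := by
  -- terminal positions have no moves
  have noMove : ∀ x : Fin n → ℕ,
      (Finset.univ.filter (fun i => 0 < x i)).card < k →
      ∀ y, ¬ exactKNimMove k x y := by
    rintro x hx y ⟨S, hS, hlt, -⟩
    have hsub : S ⊆ Finset.univ.filter (fun i => 0 < x i) := by
      intro i hi
      simp only [Finset.mem_filter, Finset.mem_univ, true_and]
      exact lt_of_le_of_lt (Nat.zero_le _) (hlt i hi)
    have := Finset.card_le_card hsub
    omega
  -- terminal positions have G = 0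
  have termG : ∀ x : Fin n → ℕ,
      (Finset.univ.filter (fun i => 0 < x i)).card < k → G x = 0 := by
    intro x hx
    rw [hG x]
    have hempty : {v | ∃ y, exactKNimMove k x y ∧ v = G y} = ∅ := by
      ext v
      simp only [Set.mem_setOf_eq, Set.mem_empty_iff_false, iff_false]
      rintro ⟨y, hy, -⟩
      exact noMove x hx y hy
    rw [hempty, mex_empty]
  -- nonterminal positions have G ≠ 0
  have nontermG : ∀ x : Fin n → ℕ,
      k ≤ (Finset.univ.filter (fun i => 0 < x i)).card → G x ≠ 0 := by
    intro x hx hGx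
    obtain ⟨T, hTsub, hTcard⟩ := Finset.exists_subset_card_eq hx
    set y : Fin n → ℕ := fun i => if i ∈ T then 0 else x i with hy
    have hmove : exactKNimMove k x y := by
      refine ⟨T, hTcard, fun i hi => ?_, fun i hi => ?_⟩
      · have := hTsub hi
        simp only [Finset.mem_filter, Finset.mem_univ, true_and] at this
        simp [hy, hi, this]
      · simp [hy, hi]
    have hyterm : (Finset.univ.filter (fun i => 0 < y i)).card < k := by
      have hsub : Finset.univ.filter (fun i => 0 < y i) ⊆ Finset.univ \ T := by
        intro i hi
        simp only [Finset.mem_filter, Finset.mem_univ, true_and] at hi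
        simp only [Finset.mem_sdiff, Finset.mem_univ, true_and]
        intro hiT
        simp [hy, hiT] at hi
      have h1 := Finset.card_le_card hsub
      have h2 : (Finset.univ \ T).card = n - k := by
        rw [Finset.card_sdiff_of_subset (Finset.subset_univ T), hTcard,
          Finset.card_univ, Fintype.card_fin]
      omega
    have h0 : (0 : ℕ) ∈ {v | ∃ y, exactKNimMove k x y ∧ v = G y} :=
      ⟨y, hmove, (termG y hyterm).symm⟩
    have hnm := mex_not_mem (value_set_finite (k := k) G x)
    rw [← hG x, hGx] at hnm
    exact hnm h0
  constructor
  · intro x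
    constructor
    · intro hGx
      by_contra hterm
      push_neg at hterm
      exact nontermG x hterm hGx
    · exact termG x
  · rintro x ⟨h1, h2⟩
    by_cases hterm : (Finset.univ.filter (fun i => 0 < x i)).card < k
    · have := hGmT x (noMove x hterm)
      omega
    · push_neg at hterm
      exact nontermG x hterm h1
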